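/- arXiv:2508.15718 — 2 statements merged into one kernel-verified Lean document; each statement's English description precedes it below -/
import Mathlib

section
/- In a multiplicative lattice Q with at least two distinct maximal elements, every maximal element that is strongly hollow is idempotent (m² = m). -/
/-- A multiplicative lattice: a complete lattice with a commutative, associative
multiplication distributing over arbitrary joins, with the top element as identity. -/
class MulLattice (Q : Type*) extends CompleteLattice Q, CommMonoid Q where
  mul_sSup : ∀ (a : Q) (s : Set Q), a * sSup s = ⨆ x ∈ s, a * x
  one_eq_top : (1 : Q) = ⊤

section OrderDefs
variable {Q : Type*} [CompleteLattice Q]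

/-- `a` is strongly hollow if `a ≤ j ⊔ k` implies `a ≤ j` or `a ≤ k`. -/
def StronglyHollow (a : Q) : Prop := ∀ j k : Q, a ≤ j ⊔ k → a ≤ j ∨ a ≤ k

/-- `a` is completely strongly hollow if whenever `a` is below an arbitrary join,
it is below one of the joinands. -/
def CompletelyStronglyHollow (a : Q) : Prop :=
  ∀ s : Set Q, a ≤ sSup s → ∃ x ∈ s, a ≤ x

/-- `κ(a)` is the join of all elements not above `a`. -/
def kappa (a : Q) : Q := sSup {k : Q | ¬ a ≤ k}

end OrderDefs

/-- The mlResidual `(a : b)`. -/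
def mlResidual {Q : Type*} [MulLattice Q] (a b : Q) : Q := sSup {x : Q | x * b ≤ a}


lemma MulLattice.mul_sup {Q : Type*} [MulLattice Q] (a b c : Q) :
    a * (b ⊔ c) = a * b ⊔ a * c := by
  have h := MulLattice.mul_sSup a {b, c}
  simpa only [sSup_pair, iSup_insert, iSup_singleton] using h

lemma MulLattice.mul_le_left {Q : Type*} [MulLattice Q] (a b : Q) : a * b ≤ a := by
  have h : a * (b ⊔ 1) = a * b ⊔ a * 1 := MulLattice.mul_sup a b 1
  have hb1 : b ⊔ (1 : Q) = 1 := by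
    rw [MulLattice.one_eq_top]; exact sup_top_eq b
  rw [hb1, mul_one] at h
  exact le_sup_left.trans h.ge

theorem stmt13 {Q : Type*} [MulLattice Q]
    (htwo : ∃ m n : Q, IsCoatom m ∧ IsCoatom n ∧ m ≠ n)
    (hprime : ∀ m : Q, IsCoatom m → ∀ x y : Q, x * y ≤ m → x ≤ m ∨ y ≤ m) :
    ∀ m : Q, IsCoatom m → StronglyHollow m → m * m = m := by
  rintro m hm hsh
  obtain ⟨m₁, m₂, h1, h2, hne⟩ := htwo
  obtain ⟨n, hn, hnm⟩ : ∃ n : Q, IsCoatom n ∧ n ≠ m := by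
    by_cases h : m₁ = m
    · exact ⟨m₂, h2, fun e => hne (h.trans e.symm)⟩
    · exact ⟨m₁, h1, h⟩
  have hsup : m ⊔ n = ⊤ :=
    hm.2 _ (lt_of_le_of_ne le_sup_left
      (fun e => hnm ((hn.le_iff_eq hm.1).mp (le_sup_right.trans e.ge)).symm))
  have key : m * (m ⊔ n) = m := by
    rw [hsup, ← MulLattice.one_eq_top, mul_one]
  rw [MulLattice.mul_sup] at key
  have : m ≤ m * m ⊔ m * n := key.ge
  rcases hsh _ _ this with h | h
  · exact le_antisymm (MulLattice.mul_le_left m m) h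
  · exfalso
    have hmn : m ≤ n := h.trans (by rw [mul_comm]; exact MulLattice.mul_le_left n m)
    exact hnm ((hm.le_iff_eq hn.1).mp hmn)
end

section
/- Let Q be a multiplicative lattice with 1 compact, and suppose 1 = ⋁_{i=1}^n a_i where each a_i is completely strongly hollow. Then Q has at most n maximal elements (Q is semi-local). -/
/-- The December 2024 Mathlib definition of a compact element of a complete lattice. -/
def CompleteLattice.IsCompactElement {α : Type*} [CompleteLattice α] (k : α) :=
  ∀ s : Set α, k ≤ sSup s → ∃ t : Finset α, ↑t ⊆ s ∧ k ≤ t.sup id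

/-! Two distinct coatoms join to `⊤`, so a strongly hollow element lies below all coatoms but
at most one. If `⊤ = ⨆ i, a i`, no coatom lies above every `a i`; choosing for each coatom an
index `i` with `a i` not below it therefore gives an injection from the coatoms into the index
set. -/

section StronglyHollow

variable {Q : Type*} [CompleteLattice Q]

theorem CompletelyStronglyHollow.stronglyHollow {a : Q} (h : CompletelyStronglyHollow a) :
    StronglyHollow a := by
  intro j k hle
  obtain ⟨x, hx, hax⟩ := h {j, k} (by rwa [sSup_pair])
  rcases hx with rfl | rfl
  exacts [Or.inl hax, Or.inr hax]

theorem StronglyHollow.eq_of_isCoatom_of_not_le {a m₁ m₂ : Q} (ha : StronglyHollow a)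
    (h₁ : IsCoatom m₁) (h₂ : IsCoatom m₂) (ha₁ : ¬a ≤ m₁) (ha₂ : ¬a ≤ m₂) : m₁ = m₂ := by
  by_contra hne
  rcases ha m₁ m₂ (by rw [h₁.sup_eq_top_of_ne h₂ hne]; exact le_top) with h | h
  exacts [ha₁ h, ha₂ h]

theorem IsCoatom.exists_not_le_of_iSup_eq_top {ι : Type*} {a : ι → Q} (h : ⨆ i, a i = ⊤)
    {m : Q} (hm : IsCoatom m) : ∃ i, ¬a i ≤ m := by
  by_contra! hle
  exact hm.1 (top_le_iff.1 (h ▸ iSup_le hle))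

theorem exists_finset_coatoms_card_le_of_iSup_eq_top {ι : Type*} [Finite ι] (a : ι → Q)
    (ha : ∀ i, StronglyHollow (a i)) (h : ⨆ i, a i = ⊤) :
    ∃ S : Finset Q, S.card ≤ Nat.card ι ∧ ∀ m : Q, IsCoatom m → m ∈ S := by
  choose f hf using fun m : {m : Q // IsCoatom m} => m.2.exists_not_le_of_iSup_eq_top h
  have hf_inj : Function.Injective f := fun m₁ m₂ he =>
    Subtype.ext <| (ha _).eq_of_isCoatom_of_not_le m₁.2 m₂.2 (hf m₁) (he ▸ hf m₂)
  have : Finite {m : Q | IsCoatom m} := Finite.of_injective f hf_inj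
  refine ⟨(Set.toFinite {m : Q | IsCoatom m}).toFinset, ?_, fun m hm => by simpa using hm⟩
  rw [← Nat.card_eq_card_finite_toFinset]
  exact Nat.card_le_card_of_injective f hf_inj

end StronglyHollow

theorem stmt16_general {Q : Type*} [MulLattice Q] {n : ℕ}
    (a : Fin n → Q) (ha : ∀ i, CompletelyStronglyHollow (a i))
    (hrep : (1 : Q) = ⨆ i, a i) :
    ∃ S : Finset Q, S.card ≤ n ∧ ∀ m : Q, IsCoatom m → m ∈ S := by
  have htop : ⨆ i, a i = ⊤ := hrep ▸ MulLattice.one_eq_top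
  simpa using exists_finset_coatoms_card_le_of_iSup_eq_top a (fun i => (ha i).stronglyHollow) htop

theorem stmt16 {Q : Type*} [MulLattice Q] {n : ℕ}
    (hc : CompleteLattice.IsCompactElement (1 : Q))
    (a : Fin n → Q) (ha : ∀ i, CompletelyStronglyHollow (a i))
    (hrep : (1 : Q) = ⨆ i, a i) :
    ∃ S : Finset Q, S.card ≤ n ∧ ∀ m : Q, IsCoatom m → m ∈ S :=
  stmt16_general a ha hrep
end
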